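/- arXiv:2405.16083 — 3 statements merged into one kernel-verified Lean document; each statement's English description precedes it below -/
import Mathlib

section
/- Let n_c, n1, n2, d1, d2 be natural numbers. Let g1, ĝ1 : ℝ^{n_c} × ℝ^{n1} → ℝ^{d1} and g2, ĝ2 : ℝ^{n_c} × ℝ^{n2} → ℝ^{d2} be differentiable functions such that the Fréchet derivative of ĝ1 is injective at every point and the Fréchet derivative of ĝ2 is injective at every point. Let h = (h_c, h_1, h_2) : ℝ^{n_c} × ℝ^{n1} × ℝ^{n2} → ℝ^{n_c} × ℝ^{n1} × ℝ^{n2} be a differentiable function satisfying, for all (z_c, z1, z2): g1(z_c, z1) = ĝ1(h_c(z_c,z1,z2), h_1(z_c,z1,z2)) and g2(z_c, z2) = ĝ2(h_c(z_c,z1,z2), h_2(z_c,z1,z2)). Then the shared component h_c depends only on z_c: there exists H : ℝ^{n_c} → ℝ^{n_c} with h_c(z_c,z1,z2) = H(z_c) for all inputs; moreover there exists H1 : ℝ^{n_c} × ℝ^{n1} → ℝ^{n1} with h_1(z_c,z1,z2) = H1(z_c,z1) for all inputs, and there exists H2 : ℝ^{n_c} × ℝ^{n2} → ℝ^{n2}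 with h_2(z_c,z1,z2) = H2(z_c,z2) for all inputs. -/
noncomputable abbrev E (n : ℕ) : Type := EuclideanSpace ℝ (Fin n)

lemma const_of_comp_const {X Y Z : Type*} [NormedAddCommGroup X] [NormedSpace ℝ X]
    [NormedAddCommGroup Y] [NormedSpace ℝ Y] [NormedAddCommGroup Z] [NormedSpace ℝ Z]
    (g : Y → Z) (hg : Differentiable ℝ g) (hinj : ∀ p, Function.Injective (fderiv ℝ g p))
    (F : X → Y) (hF : Differentiable ℝ F) (c : Z) (hcomp : ∀ x, g (F x) = c)
    (x y : X) : F x = F y := by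
  apply is_const_of_fderiv_eq_zero hF
  intro z
  have hchain : fderiv ℝ (g ∘ F) z = (fderiv ℝ g (F z)).comp (fderiv ℝ F z) :=
    fderiv_comp z (hg (F z)) (hF z)
  have hconst : (g ∘ F) = fun _ => c := funext hcomp
  rw [hconst, fderiv_fun_const] at hchain
  ext v
  exact hinj (F z) (by
    have := congrArg (fun L => L v) hchain
    simpa using this.symm)

theorem subspace_identification
    (n_c n1 n2 d1 d2 : ℕ)
    (g1 g1hat : E n_c × E n1 → E d1)
    (g2 g2hat : E n_c × E n2 → E d2)
    (hg1 : Differentiable ℝ g1) (hg1hat : Differentiable ℝ g1hat)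
    (hg2 : Differentiable ℝ g2) (hg2hat : Differentiable ℝ g2hat)
    (hinj1 : ∀ p, Function.Injective (fderiv ℝ g1hat p))
    (hinj2 : ∀ p, Function.Injective (fderiv ℝ g2hat p))
    (hc : E n_c × E n1 × E n2 → E n_c)
    (h1 : E n_c × E n1 × E n2 → E n1)
    (h2 : E n_c × E n1 × E n2 → E n2)
    (hdiff : Differentiable ℝ (fun p : E n_c × E n1 × E n2 => (hc p, h1 p, h2 p)))
    (heq1 : ∀ (zc : E n_c) (z1 : E n1) (z2 : E n2),
      g1 (zc, z1) = g1hat (hc (zc, z1, z2), h1 (zc, z1, z2)))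
    (heq2 : ∀ (zc : E n_c) (z1 : E n1) (z2 : E n2),
      g2 (zc, z2) = g2hat (hc (zc, z1, z2), h2 (zc, z1, z2))) :
    (∃ H : E n_c → E n_c, ∀ (zc : E n_c) (z1 : E n1) (z2 : E n2),
      hc (zc, z1, z2) = H zc) ∧
    (∃ H1 : E n_c × E n1 → E n1, ∀ (zc : E n_c) (z1 : E n1) (z2 : E n2),
      h1 (zc, z1, z2) = H1 (zc, z1)) ∧
    (∃ H2 : E n_c × E n2 → E n2, ∀ (zc : E n_c) (z1 : E n1) (z2 : E n2),
      h2 (zc, z1, z2) = H2 (zc, z2)) := by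
  have hhc : Differentiable ℝ hc := hdiff.fst
  have hh1 : Differentiable ℝ h1 := hdiff.snd.fst
  have hh2 : Differentiable ℝ h2 := hdiff.snd.snd
  -- constancy in z2 of (hc, h1)
  have key2 : ∀ (zc : E n_c) (z1 : E n1) (z2 z2' : E n2),
      (hc (zc, z1, z2), h1 (zc, z1, z2)) = (hc (zc, z1, z2'), h1 (zc, z1, z2')) := by
    intro zc z1 z2 z2'
    have he : Differentiable ℝ (fun z2 : E n2 => ((zc, z1, z2) : E n_c × E n1 × E n2)) :=
      (differentiable_const zc).prodMk ((differentiable_const z1).prodMk differentiable_id)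
    exact const_of_comp_const g1hat hg1hat hinj1
      (fun z2 => (hc (zc, z1, z2), h1 (zc, z1, z2)))
      ((hhc.comp he).prodMk (hh1.comp he)) (g1 (zc, z1))
      (fun z2 => (heq1 zc z1 z2).symm) z2 z2'
  -- constancy in z1 of (hc, h2)
  have key1 : ∀ (zc : E n_c) (z2 : E n2) (z1 z1' : E n1),
      (hc (zc, z1, z2), h2 (zc, z1, z2)) = (hc (zc, z1', z2), h2 (zc, z1', z2)) := by
    intro zc z2 z1 z1'
    have he : Differentiable ℝ (fun z1 : E n1 => ((zc, z1, z2) : E n_c × E n1 × E n2)) :=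
      (differentiable_const zc).prodMk (differentiable_id.prodMk (differentiable_const z2))
    exact const_of_comp_const g2hat hg2hat hinj2
      (fun z1 => (hc (zc, z1, z2), h2 (zc, z1, z2)))
      ((hhc.comp he).prodMk (hh2.comp he)) (g2 (zc, z2))
      (fun z1 => (heq2 zc z1 z2).symm) z1 z1'
  refine ⟨⟨fun zc => hc (zc, 0, 0), ?_⟩, ⟨fun p => h1 (p.1, p.2, 0), ?_⟩,
    ⟨fun p => h2 (p.1, 0, p.2), ?_⟩⟩
  · intro zc z1 z2
    have a := congrArg Prod.fst (key2 zc z1 z2 0)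
    have b := congrArg Prod.fst (key1 zc 0 z1 0)
    simp only at a b
    rw [a, b]
  · intro zc z1 z2
    exact congrArg Prod.snd (key2 zc z1 z2 0)
  · intro zc z1 z2
    exact congrArg Prod.snd (key1 zc z2 z1 0)
end

section
/- Let a, b, c, d be natural numbers. Let g : ℝ^a → ℝ^d be differentiable, let ĝ : ℝ^c → ℝ^d be differentiable with injective Fréchet derivative at every point, and let h : ℝ^a × ℝ^b → ℝ^c be differentiable and satisfy g(x) = ĝ(h(x, y)) for all x ∈ ℝ^a and y ∈ ℝ^b. Then for every (x, y) and every v ∈ ℝ^b, the Fréchet derivative of h at (x, y) applied to the vector (0, v) is zero. -/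
theorem fderiv_second_arg_vanishes
    (a b c d : ℕ)
    (g : E a → E d) (ghat : E c → E d) (h : E a × E b → E c)
    (hg : Differentiable ℝ g)
    (hghat : Differentiable ℝ ghat)
    (hinj : ∀ p, Function.Injective (fderiv ℝ ghat p))
    (hh : Differentiable ℝ h)
    (heq : ∀ (x : E a) (y : E b), g x = ghat (h (x, y))) :
    ∀ (x : E a) (y : E b) (v : E b),
      fderiv ℝ h (x, y) (0, v) = 0 := by
  intro x y v
  -- the map y ↦ h (x, y)
  have hφ : HasFDerivAt (fun y' : E b => h (x, y'))
      ((fderiv ℝ h (x, y)).comp (ContinuousLinearMap.inr ℝ (E a) (E b))) y := by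
    have := (hh (x, y)).hasFDerivAt
    exact this.comp y (HasFDerivAt.prodMk (hasFDerivAt_const x y) (hasFDerivAt_id y))
  -- ghat ∘ φ is constant g x
  have hconst : HasFDerivAt (fun y' : E b => ghat (h (x, y')))
      ((fderiv ℝ ghat (h (x, y))).comp
        ((fderiv ℝ h (x, y)).comp (ContinuousLinearMap.inr ℝ (E a) (E b)))) y :=
    ((hghat (h (x, y))).hasFDerivAt).comp y hφ
  have hconst2 : HasFDerivAt (fun _ : E b => g x) (0 : E b →L[ℝ] E d) y :=
    hasFDerivAt_const (g x) y
  have hfun : (fun y' : E b => ghat (h (x, y'))) = fun _ : E b => g x := by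
    funext y'; exact (heq x y').symm
  rw [hfun] at hconst
  have hzero := hconst2.unique hconst
  apply hinj (h (x, y)) (a₂ := 0)
  have happ := congrArg (fun L : E b →L[ℝ] E d => L v) hzero
  simpa using happ.symm
end

section
/- Let n_c and n_s be positive natural numbers, let A be an n_c × n_c matrix over ℝ, let D be an n_s × n_s matrix over ℝ, and suppose the block-diagonal matrix J = fromBlocks A 0 0 D is invertible. Suppose moreover that for every row index l and all column indices i ≠ j of A, A l i · A l j = 0. Then there exists a permutation σ of Fin n_c such that for every row l, A l (σ l) ≠ 0 and A l i = 0 for all i ≠ σ l. -/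
theorem block_diag_component_wise_identifiability
    (n_c n_s : ℕ) (hn_c : 0 < n_c) (hn_s : 0 < n_s)
    (A : Matrix (Fin n_c) (Fin n_c) ℝ)
    (D : Matrix (Fin n_s) (Fin n_s) ℝ)
    (hJ : IsUnit (Matrix.fromBlocks A 0 0 D))
    (hrow : ∀ (l i j : Fin n_c), i ≠ j → A l i * A l j = 0) :
    ∃ σ : Equiv.Perm (Fin n_c),
      ∀ l : Fin n_c, A l (σ l) ≠ 0 ∧ ∀ i : Fin n_c, i ≠ σ l → A l i = 0 := by
  have hdet : A.det ≠ 0 := by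
    have := (Matrix.isUnit_iff_isUnit_det _).mp hJ
    rw [Matrix.det_fromBlocks_zero₂₁] at this
    exact fun h => by simp [h] at this
  -- each row has a nonzero entry
  have hex : ∀ l : Fin n_c, ∃ j, A l j ≠ 0 := by
    intro l
    by_contra h
    push_neg at h
    exact hdet (Matrix.det_eq_zero_of_row_eq_zero l h)
  choose f hf using hex
  -- f is surjective
  have hsurj : Function.Surjective f := by
    intro j
    by_contra h
    push_neg at h
    apply hdet
    apply Matrix.det_eq_zero_of_column_eq_zero j
    intro l
    by_contra hA
    have : j = f l := by
      by_contra hj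
      exact hA (by
        have := hrow l j (f l) (by exact hj)
        exact (mul_eq_zero.mp this).resolve_right (hf l))
    exact h l this.symm
  have hbij : Function.Bijective f :=
    (Finite.surjective_iff_bijective).mp hsurj
  refine ⟨Equiv.ofBijective f hbij, fun l => ⟨hf l, fun i hi => ?_⟩⟩
  have : i ≠ f l := hi
  have := hrow l i (f l) this
  exact (mul_eq_zero.mp this).resolve_right (hf l)
end
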